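/- Suppose every internal vertex of T has at most b children, where b ≥ 2, and let B ≥ 2 be an integer. There is an absolute constant C such that for every downward path in T consisting of s+1 vertices (each vertex the parent of the next), the set of positions of the path's vertices in vEB_ε(T) can be covered by at most C·(s/(ε·log_b B) + 1) sets of consecutive positions, each of length at most B. -/

import Mathlib

/-!
Cut the tree recursively as in the van Emde Boas layout, but stop at pieces of height at most
`H = max ⌊log_b B⌋ 1`. Such a piece is laid out contiguously and has at most
`1 + b + ⋯ + b^(H-1) ≤ B` vertices, so it fits in one window of length `B`. A root-to-leaf
branch crosses a sequence of such pieces, and each of them (unless the whole tree is small)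
has height at least `ε (H + 1) / 2`: it arises by cutting a tree of height `h > H` at level
`⌊ε h⌋ ≥ 1`, which leaves parts of heights `> ε h / 2` and `≥ h / 2`. Hence `s + 1` consecutive
vertices of the branch meet at most `2 s / (ε (H + 1)) + 2` pieces, and `log_b B ≤ H + 1`.
-/

namespace VEB

inductive OTree : Type where
  | node : List OTree → OTree

def OTree.children : OTree → List OTree
  | .node cs => cs

mutual
  def height : OTree → ℕ
    | .node cs => 1 + heightList cs
  def heightList : List OTree → ℕ
    | [] => 0
    | c :: cs => max (height c) (heightList cs)
end

def subtreeAt? : OTree → List ℕ → Option OTree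
  | t, [] => some t
  | t, i :: p =>
    match t.children[i]? with
    | some c => subtreeAt? c p
    | none => none

/-- `p` is (the path of) a vertex of `t`. -/
def IsVertex (t : OTree) (p : List ℕ) : Prop := (subtreeAt? t p).isSome

/-- `p` is a leaf of `t`. -/
def IsLeaf (t : OTree) (p : List ℕ) : Prop := subtreeAt? t p = some (.node [])

/-- All leaves of `t` are at the same depth (the bottom level). -/
def Uniform (t : OTree) : Prop := ∀ p, IsLeaf t p → p.length + 1 = height t

/-- The top `m+1` levels of `t` (the truncation of height `m+1`). -/
def trunc : ℕ → OTree → OTree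
  | 0, _ => .node []
  | m+1, t => .node (t.children.map (trunc m))

/-- Paths of the vertices at depth `m`, in left-to-right order. -/
def levelPaths : ℕ → OTree → List (List ℕ)
  | 0, _ => [[]]
  | m+1, t => (t.children.zipIdx.map fun ic => (levelPaths m ic.1).map (ic.2 :: ·)).flatten

/-- The level at which a tree of height `h` is cut: `max ⌊ε h⌋ 1`. -/
noncomputable def cutLevel (ε : ℝ) (h : ℕ) : ℕ := max ⌊ε * (h : ℝ)⌋₊ 1

/-- The van Emde Boas order of the vertex paths of `t` (with recursion fuel). -/
noncomputable def vEBAux (ε : ℝ) : ℕ → OTree → List (List ℕ)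
  | 0, _ => []
  | fuel+1, t =>
    if height t ≤ 1 then [[]]
    else
      let m := cutLevel ε (height t)
      vEBAux ε fuel (trunc (m - 1) t) ++
        ((levelPaths m t).map fun q =>
          match subtreeAt? t q with
          | some s => (vEBAux ε fuel s).map (q ++ ·)
          | none => []).flatten

/-- The van Emde Boas order `vEB_ε(t)` of the vertex paths of `t`. -/
noncomputable def vEB (ε : ℝ) (t : OTree) : List (List ℕ) := vEBAux ε (height t) t

/-- Position (index) of vertex `p` in the van Emde Boas order. -/
noncomputable def pos (ε : ℝ) (t : OTree) (p : List ℕ) : ℕ := (vEB ε t).idxOf p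

/-- `A` is a set of vertices occupying consecutive positions in `vEB_ε(t)`. -/
def MemInterval (ε : ℝ) (t : OTree) (A : Set (List ℕ)) : Prop :=
  ∃ i n, A = {p | p ∈ ((vEB ε t).drop i).take n}

/-- The vertices of the decomposition `D` of `t`: pairs `(p, k)` of the root path
and the height of a decomposition subtree (with recursion fuel). -/
noncomputable def decompAux (ε : ℝ) : ℕ → OTree → List (List ℕ × ℕ)
  | 0, _ => []
  | fuel+1, t =>
    if height t ≤ 1 then [([], 1)]
    else
      let m := cutLevel ε (height t)
      ([], height t) ::
        (decompAux ε fuel (trunc (m - 1) t) ++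
          ((levelPaths m t).map fun q =>
            match subtreeAt? t q with
            | some s => (decompAux ε fuel s).map fun r => (q ++ r.1, r.2)
            | none => []).flatten)

/-- The vertices of the decomposition `D` of `t`. -/
noncomputable def decompVerts (ε : ℝ) (t : OTree) : List (List ℕ × ℕ) :=
  decompAux ε (height t) t

/-- The children in the decomposition tree `D` of the decomposition vertex `(p, k)`:
the top tree followed by the bottom trees in left-to-right order. -/
noncomputable def dChildren (ε : ℝ) (t : OTree) (p : List ℕ) (k : ℕ) : List (List ℕ × ℕ) :=
  if k ≤ 1 then []
  else
    match subtreeAt? t p with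
    | some s =>
      (p, cutLevel ε k) ::
        (levelPaths (cutLevel ε k) s).map fun q => (p ++ q, k - cutLevel ε k)
    | none => []

/-- The decomposition subtree `(p, k)` contains the vertex `w` of `t`;
equivalently, the leaf `{w}` of `D` lies in the subtree of `D` rooted at `(p, k)`. -/
def DContains (p : List ℕ) (k : ℕ) (w : List ℕ) : Prop :=
  p <+: w ∧ w.length < p.length + k

/-- Vertex `v` is to the left of the branch with leaf `ℓ`. -/
def LeftOfBranch (v ℓ : List ℕ) : Prop := List.Lex (· < ·) v (ℓ.take v.length)

/-- Vertex `v` is to the right of the branch with leaf `ℓ`. -/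
def RightOfBranch (v ℓ : List ℕ) : Prop := List.Lex (· < ·) (ℓ.take v.length) v

/-- Every internal vertex of `t` has at least `a` children. -/
def MinArity (t : OTree) (a : ℕ) : Prop :=
  ∀ p s, subtreeAt? t p = some s → s.children ≠ [] → a ≤ s.children.length

/-- Every internal vertex of `t` has at most `b` children. -/
def MaxArity (t : OTree) (b : ℕ) : Prop :=
  ∀ p s, subtreeAt? t p = some s → s.children.length ≤ b

/-- `w` lies on the leftmost branch descending from `v` (always taking the leftmost child). -/
def OnLeftmostBranch (v w : List ℕ) : Prop :=
  v <+: w ∧ ∀ n (hn : n < w.length), v.length ≤ n → w.get ⟨n, hn⟩ = 0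

/-- `w` lies on the rightmost branch descending from `v` (always taking the rightmost child). -/
def OnRightmostBranch (t : OTree) (v w : List ℕ) : Prop :=
  v <+: w ∧ ∀ n (hn : n < w.length), v.length ≤ n →
    ∀ s, subtreeAt? t (w.take n) = some s → w.get ⟨n, hn⟩ + 1 = s.children.length

end VEB

namespace List

variable {α β : Type*} [BEq β] [LawfulBEq β]

lemma idxOf_map_of_injective [BEq α] [LawfulBEq α] {f : α → β} (hf : Function.Injective f)
    (l : List α) (a : α) : (l.map f).idxOf (f a) = l.idxOf a := by
  induction l with
  | nil => rfl
  | cons x l ih =>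
    by_cases hx : x = a
    · simp [hx]
    · rw [map_cons, idxOf_cons_ne _ (hf.ne hx), idxOf_cons_ne _ hx, ih]

lemma exists_idxOf_flatten_map_eq_add {L : List α} {g : α → List β} (π : β → α)
    (hg : ∀ a ∈ L, ∀ y ∈ g a, π y = a) {a : α} (ha : a ∈ L) :
    ∃ c, ∀ y ∈ g a, (L.map g).flatten.idxOf y = c + (g a).idxOf y := by
  induction L with
  | nil => cases ha
  | cons x L ih =>
    by_cases hx : x = a
    · subst hx
      exact ⟨0, fun y hy => by rw [map_cons, flatten_cons, idxOf_append_of_mem hy, zero_add]⟩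
    obtain ⟨c, hc⟩ := ih (fun a' ha' => hg a' (mem_cons_of_mem _ ha'))
      ((mem_cons.mp ha).resolve_left (Ne.symm hx))
    refine ⟨(g x).length + c, fun y hy => ?_⟩
    have hyx : y ∉ g x := fun hyx => hx ((hg x mem_cons_self y hyx).symm.trans (hg a ha y hy))
    rw [map_cons, flatten_cons, idxOf_append_of_notMem hyx, hc y hy, add_assoc]

end List

namespace VEB

/-- A partition of the depths `[0, N)` of a branch into `k` consecutive blocks
`[top j, top (j + 1))`, each of length at least `γ`, such that `f` maps block `j` into the
window `[start j, start j + W)`. -/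
structure Blocking (f : ℕ → ℕ) (N W : ℕ) (γ : ℝ) where
  k : ℕ
  top : ℕ → ℕ
  start : ℕ → ℕ
  top_zero : top 0 = 0
  top_k : top k = N
  top_add_le : ∀ j < k, (top j : ℝ) + γ ≤ top (j + 1)
  mem_window : ∀ j < k, ∀ n, top j ≤ n → n < top (j + 1) → start j ≤ f n ∧ f n < start j + W

namespace Blocking

variable {f : ℕ → ℕ} {N W : ℕ} {γ : ℝ}

def single (hN : γ ≤ N) (hf : ∀ n < N, f n < W) : Blocking f N W γ where
  k := 1
  top j := j * N
  start _ := 0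
  top_zero := zero_mul N
  top_k := one_mul N
  top_add_le j hj := by
    obtain rfl : j = 0 := by omega
    simpa using hN
  mem_window j hj n _ hn := by
    obtain rfl : j = 0 := by omega
    exact ⟨Nat.zero_le _, by simpa using hf n (by simpa using hn)⟩

lemma top_add_mul_le (c : Blocking f N W γ) {i d : ℕ} (h : i + d ≤ c.k) :
    (c.top i : ℝ) + d * γ ≤ c.top (i + d) := by
  induction d with
  | zero => simp
  | succ d ih =>
    have := c.top_add_le (i + d) (by omega)
    rw [← add_assoc]
    push_cast
    linarith [ih (by omega)]

lemma top_le_top (c : Blocking f N W γ) (hγ : 0 ≤ γ) {i j : ℕ} (hij : i ≤ j) (hj : j ≤ c.k) :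
    c.top i ≤ c.top j := by
  obtain ⟨d, rfl⟩ := Nat.exists_eq_add_of_le hij
  have := c.top_add_mul_le hj
  have : (0 : ℝ) ≤ d * γ := by positivity
  exact_mod_cast (by linarith : (c.top i : ℝ) ≤ c.top (i + d))

lemma exists_block (c : Blocking f N W γ) {n : ℕ} (hn : n < N) :
    ∃ j < c.k, c.top j ≤ n ∧ n < c.top (j + 1) := by
  have hk : 0 < c.k := Nat.pos_of_ne_zero fun hk => by
    have := c.top_k
    rw [hk, c.top_zero] at this
    omega
  have hex : ∃ j, n < c.top (j + 1) := ⟨c.k - 1, by rw [Nat.sub_add_cancel hk, c.top_k]; exact hn⟩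
  refine ⟨Nat.find hex, ?_, ?_, Nat.find_spec hex⟩
  · have := Nat.find_min' hex (m := c.k - 1) (by rw [Nat.sub_add_cancel hk, c.top_k]; exact hn)
    omega
  · rcases hj : Nat.find hex with _ | j
    · rw [c.top_zero]; exact Nat.zero_le n
    · have := Nat.find_min hex (m := j) (by omega)
      omega

def append (hγ : 0 ≤ γ) {f₁ f₂ : ℕ → ℕ} {N₁ N₂ : ℕ} (c₁ : Blocking f₁ N₁ W γ)
    (c₂ : Blocking f₂ N₂ W γ) (d : ℕ) (hN : N₁ + N₂ = N) (h₁ : ∀ n < N₁, f n = f₁ n)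
    (h₂ : ∀ n < N₂, f (N₁ + n) = d + f₂ n) : Blocking f N W γ where
  k := c₁.k + c₂.k
  top j := c₁.top (min j c₁.k) + c₂.top (j - c₁.k)
  start j := if j < c₁.k then c₁.start j else d + c₂.start (j - c₁.k)
  top_zero := by simp [c₁.top_zero, c₂.top_zero]
  top_k := by simp [c₁.top_k, c₂.top_k, hN]
  top_add_le j hj := by
    by_cases hj₁ : j < c₁.k
    · rw [min_eq_left hj₁.le, min_eq_left hj₁, Nat.sub_eq_zero_of_le hj₁.le,
        Nat.sub_eq_zero_of_le hj₁, c₂.top_zero]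
      simpa using c₁.top_add_le j hj₁
    · rw [min_eq_right (by omega), min_eq_right (by omega), c₁.top_k,
        show j + 1 - c₁.k = j - c₁.k + 1 by omega]
      push_cast
      linarith [c₂.top_add_le (j - c₁.k) (by omega)]
  mem_window j hj n hn hn' := by
    by_cases hj₁ : j < c₁.k
    · rw [min_eq_left hj₁.le, Nat.sub_eq_zero_of_le hj₁.le, c₂.top_zero, add_zero] at hn
      rw [min_eq_left hj₁, Nat.sub_eq_zero_of_le hj₁, c₂.top_zero, add_zero] at hn'
      have := c₁.top_le_top hγ (show j + 1 ≤ c₁.k from hj₁) le_rfl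
      rw [c₁.top_k] at this
      rw [if_pos hj₁, h₁ n (by omega)]
      exact c₁.mem_window j hj₁ n hn hn'
    · rw [min_eq_right (by omega), c₁.top_k] at hn
      rw [min_eq_right (by omega), c₁.top_k, show j + 1 - c₁.k = j - c₁.k + 1 by omega] at hn'
      obtain ⟨n', rfl⟩ := Nat.exists_eq_add_of_le (le_trans (Nat.le_add_right _ _) hn)
      have := c₂.top_le_top hγ (show j - c₁.k + 1 ≤ c₂.k by omega) le_rfl
      rw [c₂.top_k] at this
      have hw := c₂.mem_window (j - c₁.k) (by omega) n' (by omega) (by omega)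
      rw [if_neg hj₁, h₂ n' (by omega)]
      omega

lemma card_blocks_meeting_le (c : Blocking f N W γ) (hγ : 0 < γ) (lo s : ℕ) :
    ((Finset.range c.k).filter fun j => lo < c.top (j + 1) ∧ c.top j ≤ lo + s).card ≤
      ⌊s / γ⌋₊ + 2 := by
  set J := (Finset.range c.k).filter fun j => lo < c.top (j + 1) ∧ c.top j ≤ lo + s
  rcases J.eq_empty_or_nonempty with hJ | hJ
  · simp [hJ]
  set j₀ := J.min' hJ
  have hj₀ := Finset.mem_filter.mp (J.min'_mem hJ)
  calc J.card ≤ (Finset.Icc j₀ (j₀ + ⌊s / γ⌋₊ + 1)).card := Finset.card_le_card ?_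
    _ = ⌊s / γ⌋₊ + 2 := by simp only [Nat.card_Icc]; omega
  intro j hj
  have hj₀j : j₀ ≤ j := J.min'_le j hj
  have hj := Finset.mem_filter.mp hj
  simp only [Finset.mem_range] at hj hj₀
  rw [Finset.mem_Icc]
  refine ⟨hj₀j, ?_⟩
  rcases eq_or_lt_of_le hj₀j with h | h
  · omega
  have hgap := c.top_add_mul_le (i := j₀ + 1) (d := j - j₀ - 1) (by omega)
  rw [show j₀ + 1 + (j - j₀ - 1) = j by omega] at hgap
  have : ((j - j₀ - 1 : ℕ) : ℝ) * γ ≤ s := by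
    have : (c.top j : ℝ) ≤ lo + s := by exact_mod_cast hj.2.2
    have : (lo : ℝ) < c.top (j₀ + 1) := by exact_mod_cast hj₀.2.1
    linarith
  have := Nat.le_floor ((le_div_iff₀ hγ).mpr this)
  omega

theorem exists_cover (c : Blocking f N W γ) (hγ : 0 < γ) {lo s : ℕ} (hs : lo + s < N) :
    ∃ I : Finset ℕ, (I.card : ℝ) ≤ s / γ + 2 ∧
      ∀ n, lo ≤ n → n ≤ lo + s → ∃ a ∈ I, a ≤ f n ∧ f n < a + W := by
  set J := (Finset.range c.k).filter fun j => lo < c.top (j + 1) ∧ c.top j ≤ lo + s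
  refine ⟨J.image c.start, ?_, fun n hn hn' => ?_⟩
  · calc ((J.image c.start).card : ℝ) ≤ J.card := by exact_mod_cast Finset.card_image_le
      _ ≤ ⌊s / γ⌋₊ + 2 := by exact_mod_cast c.card_blocks_meeting_le hγ lo s
      _ ≤ s / γ + 2 := by gcongr; exact Nat.floor_le (by positivity)
  · obtain ⟨j, hj, hjn, hnj⟩ := c.exists_block (n := n) (by omega)
    refine ⟨c.start j, Finset.mem_image_of_mem _ ?_, c.mem_window j hj n hjn hnj⟩
    simp only [J, Finset.mem_filter, Finset.mem_range]
    omega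

end Blocking

lemma one_le_height (t : OTree) : 1 ≤ height t := by
  cases t with | node cs => rw [height]; omega

lemma height_le_heightList_of_mem {c : OTree} {cs : List OTree} (h : c ∈ cs) :
    height c ≤ heightList cs := by
  induction cs with
  | nil => cases h
  | cons d ds ih =>
    rw [heightList]
    rcases List.mem_cons.mp h with rfl | h
    · exact le_max_left _ _
    · exact (ih h).trans (le_max_right _ _)

lemma exists_height_eq_heightList {cs : List OTree} (h : cs ≠ []) :
    ∃ c ∈ cs, height c = heightList cs := by
  induction cs with
  | nil => exact absurd rfl h
  | cons d ds ih =>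
    rw [heightList]
    rcases eq_or_ne ds [] with rfl | hne
    · exact ⟨d, List.mem_cons_self, by rw [heightList]; omega⟩
    obtain ⟨c, hc, hch⟩ := ih hne
    rcases le_total (heightList ds) (height d) with hle | hle
    · exact ⟨d, List.mem_cons_self, by omega⟩
    · exact ⟨c, List.mem_cons_of_mem _ hc, by omega⟩

lemma subtreeAt?_append (t : OTree) (a b : List ℕ) :
    subtreeAt? t (a ++ b) = (subtreeAt? t a).bind (subtreeAt? · b) := by
  induction a generalizing t with
  | nil => rfl
  | cons i a ih =>
    simp only [List.cons_append, subtreeAt?]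
    cases t.children[i]? <;> simp [ih]

lemma isVertex_append {t : OTree} {a b : List ℕ} :
    IsVertex t (a ++ b) ↔ ∃ S, subtreeAt? t a = some S ∧ IsVertex S b := by
  unfold IsVertex
  rw [subtreeAt?_append]
  cases subtreeAt? t a <;> simp

lemma IsVertex.of_prefix {t : OTree} {p w : List ℕ} (hw : IsVertex t w) (hp : p <+: w) :
    IsVertex t p := by
  obtain ⟨r, rfl⟩ := hp
  obtain ⟨S, hS, -⟩ := isVertex_append.mp hw
  simp [IsVertex, hS]

lemma height_add_length_le {t S : OTree} {p : List ℕ} (h : subtreeAt? t p = some S) :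
    height S + p.length ≤ height t := by
  induction p generalizing t with
  | nil => cases h; simp
  | cons i p ih =>
    obtain ⟨cs⟩ := t
    simp only [subtreeAt?, OTree.children] at h
    cases hc : cs[i]? with
    | none => simp [hc] at h
    | some c =>
      rw [hc] at h
      have := height_le_heightList_of_mem (List.mem_of_getElem? hc)
      have := ih h
      simp only [height, List.length_cons]
      omega

lemma IsVertex.length_lt_height {t : OTree} {p : List ℕ} (h : IsVertex t p) :
    p.length < height t := by
  obtain ⟨S, hS⟩ := Option.isSome_iff_exists.mp h
  have := height_add_length_le hS
  have := one_le_height S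
  omega

lemma MaxArity.subtreeAt? {t S : OTree} {b : ℕ} {p : List ℕ} (ht : MaxArity t b)
    (h : subtreeAt? t p = some S) : MaxArity S b := fun r s hr =>
  ht (p ++ r) s (by rw [subtreeAt?_append, h]; exact hr)

lemma exists_isLeaf_length_add_one_eq_height (t : OTree) :
    ∃ ℓ, IsLeaf t ℓ ∧ ℓ.length + 1 = height t := by
  induction t using OTree.rec
    (motive_2 := fun cs => ∀ c ∈ cs, ∃ ℓ, IsLeaf c ℓ ∧ ℓ.length + 1 = height c) with
  | node cs ih =>
    rcases eq_or_ne cs [] with rfl | hne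
    · exact ⟨[], rfl, by simp [height, heightList]⟩
    obtain ⟨c, hc, hch⟩ := exists_height_eq_heightList hne
    obtain ⟨ℓ, hℓ, hlen⟩ := ih c hc
    obtain ⟨i, hi, rfl⟩ := List.getElem_of_mem hc
    refine ⟨i :: ℓ, ?_, ?_⟩
    · simpa [IsLeaf, subtreeAt?, OTree.children, hi] using hℓ
    · simp only [height, List.length_cons]; omega
  | nil => rename_i hc; cases hc
  | cons d ds ihd ihds =>
    rename_i c hc
    rcases List.mem_cons.mp hc with rfl | hc
    exacts [ihd, ihds c hc]

lemma IsVertex.exists_isLeaf {t : OTree} {q : List ℕ} (hq : IsVertex t q) :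
    ∃ ℓ, IsLeaf t ℓ ∧ q <+: ℓ := by
  obtain ⟨S, hS⟩ := Option.isSome_iff_exists.mp hq
  obtain ⟨r, hr, -⟩ := exists_isLeaf_length_add_one_eq_height S
  refine ⟨q ++ r, ?_, List.prefix_append q r⟩
  rw [IsLeaf, subtreeAt?_append, hS]
  exact hr

lemma Uniform.subtreeAt? {t S : OTree} {p : List ℕ} (ht : Uniform t)
    (h : subtreeAt? t p = some S) : Uniform S ∧ height S + p.length = height t := by
  have leaf_length : ∀ r, IsLeaf S r → r.length + 1 + p.length = height t := by
    intro r hr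
    have := ht (p ++ r) (by rw [IsLeaf, subtreeAt?_append, h]; exact hr)
    rw [List.length_append] at this
    omega
  obtain ⟨ℓ, hℓ, hlen⟩ := exists_isLeaf_length_add_one_eq_height S
  have := leaf_length ℓ hℓ
  exact ⟨fun r hr => by have := leaf_length r hr; omega, by omega⟩

lemma subtreeAt?_trunc {p : List ℕ} {k : ℕ} (t : OTree) (h : p.length ≤ k) :
    subtreeAt? (trunc k t) p = (subtreeAt? t p).map (trunc (k - p.length)) := by
  induction p generalizing k t with
  | nil => rfl
  | cons i p ih =>
    obtain _ | k := k
    · simp at h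
    obtain ⟨cs⟩ := t
    simp only [subtreeAt?, trunc, OTree.children, List.getElem?_map]
    cases cs[i]? with
    | none => rfl
    | some c => simpa using ih c (by simpa using h)

lemma height_trunc (t : OTree) (k : ℕ) : height (trunc k t) = min (k + 1) (height t) := by
  induction t using OTree.rec
    (motive_2 := fun cs => ∀ j, heightList (cs.map (trunc j)) = min (j + 1) (heightList cs))
    generalizing k with
  | node cs ih =>
    cases k with
    | zero => simp only [trunc, height, heightList]; omega
    | succ k => simp only [trunc, height, OTree.children, ih k]; omega
  | nil => simp [heightList]
  | cons c cs ihc ihcs =>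
    rename_i j
    simp only [List.map_cons, heightList, ihc, ihcs j]
    omega

lemma isVertex_trunc {p : List ℕ} {k : ℕ} {t : OTree} :
    IsVertex (trunc k t) p ↔ IsVertex t p ∧ p.length ≤ k := by
  constructor
  · intro h
    have hk : p.length ≤ k := by
      have := h.length_lt_height
      rw [height_trunc] at this
      omega
    unfold IsVertex at h
    rw [subtreeAt?_trunc t hk, Option.isSome_map] at h
    exact ⟨h, hk⟩
  · rintro ⟨h, hk⟩
    unfold IsVertex
    rwa [subtreeAt?_trunc t hk, Option.isSome_map]

lemma IsLeaf.isVertex {t : OTree} {p : List ℕ} (h : IsLeaf t p) : IsVertex t p := by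
  rw [IsLeaf] at h
  simp [IsVertex, h]

lemma isLeaf_trunc {t : OTree} {p : List ℕ} {k : ℕ} (hp : IsVertex t p) (hk : p.length = k) :
    IsLeaf (trunc k t) p := by
  obtain ⟨S, hS⟩ := Option.isSome_iff_exists.mp hp
  rw [IsLeaf, subtreeAt?_trunc t hk.le, hS, hk, Nat.sub_self]
  rfl

lemma IsLeaf.drop {t S : OTree} {ℓ : List ℕ} {m : ℕ} (hℓ : IsLeaf t ℓ)
    (hS : subtreeAt? t (ℓ.take m) = some S) : IsLeaf S (ℓ.drop m) := by
  rwa [IsLeaf, ← List.take_append_drop m ℓ, subtreeAt?_append, hS] at hℓ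

lemma Uniform.trunc {t : OTree} {k : ℕ} (ht : Uniform t) (hk : k + 1 ≤ height t) :
    Uniform (trunc k t) := by
  intro p hp
  have hpk : p.length ≤ k := (isVertex_trunc.mp hp.isVertex).2
  obtain ⟨S, hS⟩ := Option.isSome_iff_exists.mp (isVertex_trunc.mp hp.isVertex).1
  rw [IsLeaf, subtreeAt?_trunc t hpk, hS, Option.map_some, Option.some_inj] at hp
  rw [height_trunc]
  obtain hk' | hk' := eq_or_lt_of_le hpk
  · omega
  obtain ⟨j, hj⟩ : ∃ j, k - p.length = j + 1 := ⟨k - p.length - 1, by omega⟩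
  rw [hj] at hp
  have hleaf : IsLeaf t p := by
    obtain ⟨cs⟩ := S
    simp only [VEB.trunc, OTree.children, OTree.node.injEq, List.map_eq_nil_iff] at hp
    rw [IsLeaf, hS, hp]
  have := ht p hleaf
  omega

lemma MaxArity.trunc {t : OTree} {b : ℕ} (ht : MaxArity t b) (k : ℕ) :
    MaxArity (trunc k t) b := by
  intro p S hp
  have hpk : p.length ≤ k := (isVertex_trunc.mp (Option.isSome_of_eq_some hp)).2
  rw [subtreeAt?_trunc t hpk] at hp
  obtain ⟨S', hS', rfl⟩ := Option.map_eq_some_iff.mp hp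
  cases k - p.length with
  | zero => simp [VEB.trunc, OTree.children]
  | succ j => simpa [VEB.trunc, OTree.children] using ht p S' hS'

lemma isVertex_cons {t : OTree} {i : ℕ} {p : List ℕ} :
    IsVertex t (i :: p) ↔ ∃ c, t.children[i]? = some c ∧ IsVertex c p := by
  unfold IsVertex
  simp only [subtreeAt?]
  cases t.children[i]? <;> simp

lemma mem_levelPaths {m : ℕ} {t : OTree} {p : List ℕ} :
    p ∈ levelPaths m t ↔ IsVertex t p ∧ p.length = m := by
  induction m generalizing t p with
  | zero =>
    simp only [levelPaths, List.mem_singleton]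
    refine ⟨?_, fun h => List.eq_nil_of_length_eq_zero h.2⟩
    rintro rfl
    exact ⟨rfl, rfl⟩
  | succ m ih =>
    cases p with
    | nil => simp [levelPaths]
    | cons i p =>
      simp only [levelPaths, List.mem_flatten, List.mem_map, Prod.exists, isVertex_cons,
        List.length_cons, Nat.add_right_cancel_iff]
      constructor
      · rintro ⟨_, ⟨c, j, hcj, rfl⟩, hp⟩
        obtain ⟨r, hr, hri⟩ := List.mem_map.mp hp
        obtain ⟨rfl, rfl⟩ := List.cons_eq_cons.mp hri
        obtain ⟨hv, hlen⟩ := ih.mp hr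
        exact ⟨⟨c, List.mk_mem_zipIdx_iff_getElem?.mp hcj, hv⟩, hlen⟩
      · rintro ⟨⟨c, hc, hv⟩, hlen⟩
        exact ⟨_, ⟨c, i, List.mk_mem_zipIdx_iff_getElem?.mpr hc, rfl⟩,
          List.mem_map_of_mem (ih.mpr ⟨hv, hlen⟩)⟩

lemma length_levelPaths_le {t : OTree} {b : ℕ} (ht : MaxArity t b) (m : ℕ) :
    (levelPaths m t).length ≤ b ^ m := by
  induction m generalizing t with
  | zero => simp [levelPaths]
  | succ m ih =>
    rw [levelPaths, List.length_flatten, List.map_map, pow_succ']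
    refine (List.sum_le_card_nsmul _ (b ^ m) ?_).trans ?_
    · simp only [List.mem_map, Function.comp_apply, List.length_map]
      rintro _ ⟨⟨c, i⟩, hci, rfl⟩
      refine ih (ht.subtreeAt? (p := [i]) ?_)
      simp [subtreeAt?, List.mk_mem_zipIdx_iff_getElem?.mp hci]
    · simpa using Nat.mul_le_mul_right _ (ht [] t rfl)

lemma one_le_cutLevel (ε : ℝ) (h : ℕ) : 1 ≤ cutLevel ε h := le_max_right _ _

lemma two_mul_cutLevel_le {ε : ℝ} {h : ℕ} (hε : ε ≤ 1/2) (hh : 2 ≤ h) :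
    2 * cutLevel ε h ≤ h := by
  have : ⌊ε * h⌋₊ ≤ h / 2 :=
    calc ⌊ε * h⌋₊ ≤ ⌊(h : ℝ) / 2⌋₊ := Nat.floor_le_floor (by nlinarith [h.cast_nonneg (α := ℝ)])
      _ = h / 2 := by rw [Nat.floor_div_ofNat, Nat.floor_natCast]
  rw [cutLevel]
  omega

lemma lt_two_mul_cutLevel (ε : ℝ) (h : ℕ) : ε * h < 2 * cutLevel ε h := by
  have h1 := Nat.lt_floor_add_one (ε * h)
  have h2 : (⌊ε * h⌋₊ : ℝ) ≤ cutLevel ε h := by exact_mod_cast le_max_left _ _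
  have h3 : (1 : ℝ) ≤ cutLevel ε h := by exact_mod_cast one_le_cutLevel ε h
  linarith

lemma vEBAux_congr_fuel {ε : ℝ} (hε : ε ≤ 1/2) {f₁ f₂ : ℕ} {t : OTree} (h₁ : height t ≤ f₁)
    (h₂ : height t ≤ f₂) : vEBAux ε f₁ t = vEBAux ε f₂ t := by
  induction f₁ generalizing f₂ t with
  | zero => have := one_le_height t; omega
  | succ f ih =>
    obtain _ | f₂ := f₂
    · have := one_le_height t; omega
    simp only [vEBAux]
    split_ifs with h1
    · rfl
    have := two_mul_cutLevel_le hε (by omega : 2 ≤ height t)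
    have := one_le_cutLevel ε (height t)
    congr 1
    · apply ih <;> rw [height_trunc] <;> omega
    · congr 1
      refine List.map_congr_left fun q hq => ?_
      have := (mem_levelPaths.mp hq).2
      split
      · next S hS =>
        have := height_add_length_le hS
        rw [ih (f₂ := f₂) (by omega) (by omega)]
      · rfl

lemma vEB_of_height_le_one (ε : ℝ) {t : OTree} (h : height t ≤ 1) : vEB ε t = [[]] := by
  rw [vEB, show height t = 0 + 1 by have := one_le_height t; omega, vEBAux, if_pos h]

noncomputable def subtreeOrder (ε : ℝ) (t : OTree) (q : List ℕ) : List (List ℕ) :=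
  match subtreeAt? t q with
  | some s => (vEB ε s).map (q ++ ·)
  | none => []

lemma subtreeOrder_of_subtreeAt? {ε : ℝ} {t S : OTree} {q : List ℕ}
    (hS : subtreeAt? t q = some S) : subtreeOrder ε t q = (vEB ε S).map (q ++ ·) := by
  simp only [subtreeOrder, hS]

lemma take_length_of_mem_subtreeOrder {ε : ℝ} {t : OTree} {q y : List ℕ}
    (hy : y ∈ subtreeOrder ε t q) : y.take q.length = q := by
  unfold subtreeOrder at hy
  split at hy
  · obtain ⟨r, -, rfl⟩ := List.mem_map.mp hy
    exact List.take_left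
  · cases hy

lemma vEB_eq_append {ε : ℝ} (hε : ε ≤ 1/2) {t : OTree} (h : 2 ≤ height t) :
    vEB ε t = vEB ε (trunc (cutLevel ε (height t) - 1) t) ++
      ((levelPaths (cutLevel ε (height t)) t).map (subtreeOrder ε t)).flatten := by
  obtain ⟨f, hf⟩ : ∃ f, height t = f + 1 := ⟨height t - 1, by omega⟩
  have := two_mul_cutLevel_le hε h
  have := one_le_cutLevel ε (height t)
  rw [vEB, hf, vEBAux, if_neg (by omega), ← hf]
  dsimp only
  congr 1
  · exact vEBAux_congr_fuel hε (f₂ := height _) (by rw [height_trunc]; omega) le_rfl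
  · congr 1
    refine List.map_congr_left fun q hq => ?_
    have := (mem_levelPaths.mp hq).2
    split
    · next S hS =>
      have := height_add_length_le hS
      rw [subtreeOrder_of_subtreeAt? hS, vEB,
        vEBAux_congr_fuel hε (f₂ := height S) (by omega) le_rfl]
    · next hS => simp only [subtreeOrder, hS]

lemma mem_flatten_map_subtreeOrder {ε : ℝ} {t : OTree} {m : ℕ}
    (hsub : ∀ q S, subtreeAt? t q = some S → q.length = m → ∀ r, r ∈ vEB ε S ↔ IsVertex S r)
    {w : List ℕ} :
    w ∈ ((levelPaths m t).map (subtreeOrder ε t)).flatten ↔ IsVertex t w ∧ m ≤ w.length := by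
  simp only [List.mem_flatten, List.mem_map]
  constructor
  · rintro ⟨_, ⟨q, hq, rfl⟩, hw⟩
    obtain ⟨hqv, hqlen⟩ := mem_levelPaths.mp hq
    obtain ⟨S, hS⟩ := Option.isSome_iff_exists.mp hqv
    rw [subtreeOrder_of_subtreeAt? hS] at hw
    obtain ⟨r, hr, rfl⟩ := List.mem_map.mp hw
    exact ⟨isVertex_append.mpr ⟨S, hS, (hsub q S hS hqlen r).mp hr⟩, by simp [hqlen]⟩
  · rintro ⟨hw, hlen⟩
    rw [← List.take_append_drop m w] at hw ⊢
    obtain ⟨S, hS, hr⟩ := isVertex_append.mp hw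
    have hqlen : (w.take m).length = m := by simp [hlen]
    refine ⟨_, ⟨_, mem_levelPaths.mpr ⟨hw.of_prefix (List.prefix_append _ _), hqlen⟩, rfl⟩, ?_⟩
    rw [subtreeOrder_of_subtreeAt? hS]
    exact List.mem_map_of_mem ((hsub _ S hS hqlen _).mpr hr)

lemma mem_vEB {ε : ℝ} (hε : ε ≤ 1/2) {t : OTree} {w : List ℕ} : w ∈ vEB ε t ↔ IsVertex t w := by
  induction hN : height t using Nat.strong_induction_on generalizing t w with
  | _ N ih =>
  subst hN
  rcases le_or_gt (height t) 1 with h1 | h1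
  · rw [vEB_of_height_le_one ε h1, List.mem_singleton]
    refine ⟨by rintro rfl; rfl, fun hw => List.eq_nil_of_length_eq_zero ?_⟩
    have := hw.length_lt_height
    omega
  set m := cutLevel ε (height t)
  have := two_mul_cutLevel_le hε h1
  have := one_le_cutLevel ε (height t)
  rw [vEB_eq_append hε h1, List.mem_append, ih _ (by rw [height_trunc]; omega) rfl,
    isVertex_trunc, mem_flatten_map_subtreeOrder fun q S hS hq r =>
      ih _ (by have := height_add_length_le hS; omega) rfl]
  constructor
  · rintro (⟨hw, -⟩ | ⟨hw, -⟩) <;> exact hw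
  · intro hw
    rcases le_or_gt w.length (m - 1) with h | h
    exacts [Or.inl ⟨hw, h⟩, Or.inr ⟨hw, by omega⟩]

lemma length_vEB_le {ε : ℝ} (hε : ε ≤ 1/2) {t : OTree} {b : ℕ} (hbt : MaxArity t b) :
    (vEB ε t).length ≤ ∑ i ∈ Finset.range (height t), b ^ i := by
  induction hN : height t using Nat.strong_induction_on generalizing t with
  | _ N ih =>
  subst hN
  rcases le_or_gt (height t) 1 with h1 | h1
  · rw [vEB_of_height_le_one ε h1, show height t = 1 by have := one_le_height t; omega]
    simp
  set m := cutLevel ε (height t)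
  have := two_mul_cutLevel_le hε h1
  have := one_le_cutLevel ε (height t)
  have top : (vEB ε (trunc (m - 1) t)).length ≤ ∑ i ∈ Finset.range m, b ^ i := by
    have hT : height (trunc (m - 1) t) = m := by rw [height_trunc]; omega
    simpa [hT] using ih m (by omega) (hbt.trunc (m - 1)) hT
  have block : ∀ q ∈ levelPaths m t,
      (subtreeOrder ε t q).length ≤ ∑ i ∈ Finset.range (height t - m), b ^ i := by
    intro q hq
    obtain ⟨hqv, hqlen⟩ := mem_levelPaths.mp hq
    obtain ⟨S, hS⟩ := Option.isSome_iff_exists.mp hqv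
    have := height_add_length_le hS
    rw [subtreeOrder_of_subtreeAt? hS, List.length_map]
    refine (ih _ (by omega) (hbt.subtreeAt? hS) rfl).trans ?_
    exact Finset.sum_le_sum_of_subset (Finset.range_subset_range.mpr (by omega))
  calc (vEB ε t).length
      ≤ ∑ i ∈ Finset.range m, b ^ i + b ^ m * ∑ i ∈ Finset.range (height t - m), b ^ i := by
        rw [vEB_eq_append hε h1, List.length_append, List.length_flatten, List.map_map]
        refine add_le_add top
          ((List.sum_le_card_nsmul _ (∑ i ∈ Finset.range (height t - m), b ^ i) ?_).trans ?_)
        · simpa using block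
        · simpa using Nat.mul_le_mul_right _ (length_levelPaths_le hbt m)
    _ = ∑ i ∈ Finset.range (height t), b ^ i := by
        rw [Finset.mul_sum, ← Nat.add_sub_of_le (by omega : m ≤ height t),
          Finset.sum_range_add, Nat.add_sub_cancel_left]
        simp [pow_add]

lemma pos_lt {ε : ℝ} (hε : ε ≤ 1/2) {t : OTree} {b : ℕ} (hbt : MaxArity t b) {w : List ℕ}
    (hw : IsVertex t w) : pos ε t w < ∑ i ∈ Finset.range (height t), b ^ i :=
  (List.idxOf_lt_length_of_mem ((mem_vEB hε).mpr hw)).trans_le (length_vEB_le hε hbt)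

lemma pos_trunc_cutLevel {ε : ℝ} (hε : ε ≤ 1/2) {t : OTree} (h : 2 ≤ height t) {w : List ℕ}
    (hw : IsVertex t w) (hlen : w.length < cutLevel ε (height t)) :
    pos ε t w = pos ε (trunc (cutLevel ε (height t) - 1) t) w := by
  rw [pos, pos, vEB_eq_append hε h,
    List.idxOf_append_of_mem ((mem_vEB hε).mpr (isVertex_trunc.mpr ⟨hw, by omega⟩))]

lemma exists_pos_append_eq_add {ε : ℝ} (hε : ε ≤ 1/2) {t S : OTree} (h : 2 ≤ height t)
    {q : List ℕ} (hq : q ∈ levelPaths (cutLevel ε (height t)) t)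
    (hS : subtreeAt? t q = some S) :
    ∃ c, ∀ w, IsVertex S w → pos ε t (q ++ w) = c + pos ε S w := by
  set m := cutLevel ε (height t)
  have hg : ∀ p ∈ levelPaths m t, ∀ y ∈ subtreeOrder ε t p, y.take m = p := fun p hp y hy =>
    (mem_levelPaths.mp hp).2 ▸ take_length_of_mem_subtreeOrder hy
  obtain ⟨c, hc⟩ := List.exists_idxOf_flatten_map_eq_add _ hg hq
  refine ⟨(vEB ε (trunc (m - 1) t)).length + c, fun w hw => ?_⟩
  have hy : q ++ w ∈ subtreeOrder ε t q := by
    rw [subtreeOrder_of_subtreeAt? hS]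
    exact List.mem_map_of_mem ((mem_vEB hε).mpr hw)
  have htop : q ++ w ∉ vEB ε (trunc (m - 1) t) := fun hmem => by
    have hlen := (isVertex_trunc.mp ((mem_vEB hε).mp hmem)).2
    have := one_le_cutLevel ε (height t)
    simp only [List.length_append, (mem_levelPaths.mp hq).2] at hlen
    omega
  rw [pos, vEB_eq_append hε h, List.idxOf_append_of_notMem htop, hc _ hy,
    subtreeOrder_of_subtreeAt? hS, List.idxOf_map_of_injective (List.append_right_injective q),
    add_assoc]
  rfl

theorem nonempty_blocking_of_isLeaf {ε : ℝ} (hε0 : 0 ≤ ε) (hε : ε ≤ 1/2) {b H : ℕ} (hH : 1 ≤ H)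
    {t : OTree} (ht : Uniform t) (hbt : MaxArity t b) (htH : ε * (H + 1) ≤ 2 * height t)
    {ℓ : List ℕ} (hℓ : IsLeaf t ℓ) :
    Nonempty (Blocking (fun n => pos ε t (ℓ.take n)) (height t)
      (∑ i ∈ Finset.range H, b ^ i) (ε * (H + 1) / 2)) := by
  induction hN : height t using Nat.strong_induction_on generalizing t ℓ with
  | _ N ih =>
  subst hN
  have hℓlen := ht ℓ hℓ
  rcases le_or_gt (height t) H with hsmall | hlarge
  · refine ⟨.single (by linarith) fun n hn => ?_⟩
    refine (pos_lt hε hbt (hℓ.isVertex.of_prefix (List.take_prefix n ℓ))).trans_le ?_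
    exact Finset.sum_le_sum_of_subset (Finset.range_subset_range.mpr hsmall)
  set m := cutLevel ε (height t)
  have h2 : 2 ≤ height t := by omega
  have := two_mul_cutLevel_le hε h2
  have := one_le_cutLevel ε (height t)
  obtain ⟨S, hS⟩ := Option.isSome_iff_exists.mp (hℓ.isVertex.of_prefix (List.take_prefix m ℓ))
  obtain ⟨hSu, hSh⟩ := ht.subtreeAt? hS
  rw [List.length_take, min_eq_left (by omega)] at hSh
  have hT : height (trunc (m - 1) t) = m := by rw [height_trunc]; omega
  -- Both parts are high enough: `ε h < 2 m` for the top one and `h ≤ 2 (h - m)` for the other.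
  have hHt : (H : ℝ) + 1 ≤ height t := by exact_mod_cast hlarge
  have hTH : ε * (H + 1) ≤ 2 * height (trunc (m - 1) t) := by
    rw [hT]
    nlinarith [lt_two_mul_cutLevel ε (height t)]
  have hSH : ε * (H + 1) ≤ 2 * height S := by
    have : (height t : ℝ) ≤ 2 * height S := by exact_mod_cast (by omega : height t ≤ 2 * height S)
    nlinarith
  have hℓT : IsLeaf (trunc (m - 1) t) (ℓ.take (m - 1)) :=
    isLeaf_trunc (hℓ.isVertex.of_prefix (List.take_prefix _ ℓ)) (by rw [List.length_take]; omega)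
  obtain ⟨c₀⟩ := ih _ (by omega) (ht.trunc (by omega)) (hbt.trunc _) hTH hℓT rfl
  obtain ⟨c₁⟩ := ih _ (by omega) hSu (hbt.subtreeAt? hS) hSH (hℓ.drop hS) rfl
  obtain ⟨d, hd⟩ := exists_pos_append_eq_add hε h2
    (mem_levelPaths.mpr ⟨Option.isSome_of_eq_some hS, by rw [List.length_take]; omega⟩) hS
  refine ⟨c₀.append (by positivity) c₁ d (by omega) (fun n hn => ?_) (fun n hn => ?_)⟩
  · rw [hT] at hn
    rw [List.take_take, min_eq_left (by omega), pos_trunc_cutLevel hε h2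
      (hℓ.isVertex.of_prefix (List.take_prefix n ℓ)) (by rw [List.length_take]; omega)]
  · rw [hT, List.take_add]
    exact hd _ ((hℓ.drop hS).isVertex.of_prefix (List.take_prefix n _))

lemma logb_lt_log_add_one (b B : ℕ) :
    Real.logb b B < Nat.log b B + 1 := by
  rw [← Real.natFloor_logb_natCast]
  exact Nat.lt_floor_add_one _

lemma sum_range_max_log_one_le {b B : ℕ} (hb : 2 ≤ b) (hB : 1 ≤ B) :
    ∑ i ∈ Finset.range (max (Nat.log b B) 1), b ^ i ≤ B := by
  rcases le_total (Nat.log b B) 1 with h | h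
  · simpa [max_eq_right h] using hB
  · rw [max_eq_left h]
    exact ((Nat.geomSum_lt hb fun i hi => Finset.mem_range.mp hi).trans_le
      (Nat.pow_log_le_self b (by omega))).le

theorem exists_branch_segment_cover {ε : ℝ} (hε0 : 0 < ε) (hε : ε ≤ 1/2) {b H : ℕ} (hH : 1 ≤ H)
    {t : OTree} (ht : Uniform t) (hbt : MaxArity t b) {q : List ℕ} (hq : IsVertex t q) {s : ℕ}
    (hs : s ≤ q.length) :
    ∃ I : Finset ℕ, (I.card : ℝ) ≤ s / (ε * (H + 1) / 2) + 2 ∧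
      ∀ n, q.length - s ≤ n → n ≤ q.length → ∃ a ∈ I,
        a ≤ pos ε t (q.take n) ∧ pos ε t (q.take n) < a + ∑ i ∈ Finset.range H, b ^ i := by
  obtain ⟨ℓ, hℓ, r, rfl⟩ := hq.exists_isLeaf
  have hℓlen := ht _ hℓ
  rw [List.length_append] at hℓlen
  by_cases htH : ε * (H + 1) ≤ 2 * height t
  · obtain ⟨c⟩ := nonempty_blocking_of_isLeaf hε0.le hε hH ht hbt htH hℓ
    obtain ⟨I, hI, hcover⟩ := c.exists_cover (by positivity) (lo := q.length - s) (s := s)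
      (by omega)
    refine ⟨I, hI, fun n hn hn' => ?_⟩
    simpa only [List.take_append_of_le_length hn'] using hcover n hn (by omega)
  · have hsmall : height t ≤ H := by
      have : (height t : ℝ) < H + 1 := by nlinarith
      exact_mod_cast Nat.lt_succ_iff.mp (by exact_mod_cast this)
    refine ⟨{0}, ?_, fun n _ _ => ⟨0, Finset.mem_singleton_self 0, Nat.zero_le _, ?_⟩⟩
    · have : 0 ≤ (s : ℝ) / (ε * (H + 1) / 2) := by positivity
      simp only [Finset.card_singleton, Nat.cast_one]
      linarith
    · rw [zero_add]
      refine (pos_lt hε hbt (hq.of_prefix (List.take_prefix n _))).trans_le ?_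
      exact Finset.sum_le_sum_of_subset (Finset.range_subset_range.mpr hsmall)

/-- If every internal vertex of `T` has at most `b` children (`b ≥ 2`)
and `B ≥ 2` is an integer, then there is an absolute constant `C` such that the positions
in `vEB_ε(T)` of any downward path with `s+1` vertices (the prefixes `q.take n` for
`q.length - s ≤ n ≤ q.length` of a vertex `q`) can be covered by at most
`C·(s/(ε·log_b B) + 1)` sets of consecutive positions, each of length at most `B`. -/
theorem branch_segment_block_cover :
    ∃ C : ℝ, 0 < C ∧
      ∀ (ε : ℝ), 0 < ε → ε ≤ 1/2 →
      ∀ (t : OTree), Uniform t →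
      ∀ (b : ℕ), 2 ≤ b → MaxArity t b →
      ∀ (B : ℕ), 2 ≤ B →
      ∀ (q : List ℕ), IsVertex t q →
      ∀ (s : ℕ), s ≤ q.length →
        ∃ I : Finset ℕ,
          (I.card : ℝ) ≤ C * ((s : ℝ) / (ε * Real.logb b B) + 1) ∧
          ∀ n, q.length - s ≤ n → n ≤ q.length →
            ∃ a ∈ I, a ≤ pos ε t (q.take n) ∧ pos ε t (q.take n) < a + B := by
  refine ⟨2, two_pos, fun ε hε0 hε t ht b hb hbt B hB q hq s hs => ?_⟩
  set H := max (Nat.log b B) 1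
  obtain ⟨I, hI, hcover⟩ :=
    exists_branch_segment_cover (H := H) hε0 hε (le_max_right _ 1) ht hbt hq hs
  have hWB : ∑ i ∈ Finset.range H, b ^ i ≤ B := sum_range_max_log_one_le hb (by omega)
  have hlog : 0 < Real.logb b B := Real.logb_pos (by exact_mod_cast hb) (by exact_mod_cast hB)
  have hlogH : Real.logb b B ≤ H + 1 := by
    have : (Nat.log b B : ℝ) ≤ H := by exact_mod_cast le_max_left _ _
    linarith [logb_lt_log_add_one b B]
  have : s / (ε * (H + 1) / 2) ≤ 2 * (s / (ε * Real.logb b B)) := by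
    rw [div_div_eq_mul_div, mul_comm (s : ℝ) 2, mul_div_assoc]
    gcongr
  refine ⟨I, by linarith, fun n hn hn' => ?_⟩
  obtain ⟨a, ha, h₁, h₂⟩ := hcover n hn hn'
  exact ⟨a, ha, h₁, by omega⟩

end VEB
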